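/- arXiv:2309.05908 — 3 statements merged into one kernel-verified Lean document; each statement's English description precedes it below -/
import Mathlib

section
/- Let τ > 0, let K ⊆ ℝⁿ, let f : ℝⁿ × ℝⁿ → ℝⁿ be continuously differentiable in its second argument, let h₀, h₁ : ℝⁿ → ℝ be continuously differentiable, let e₁ : ℝⁿ → ℝⁿ and C ∈ ℝⁿ. Fix t ∈ ℝ and let x : ℝ → ℝⁿ be continuously differentiable on [t−τ, t] with x(θ) ∈ K and |x′(θ)| ≤ C coordinatewise for all θ ∈ [t−τ, t], and with x′(t) = f(x(t), x(t−τ)). Assume that coordinatewise |∇h₁(b)ᵀ − ∇h₀(a)ᵀ·J_y f(a,b)| ≤ e₁(a)ᵀ for all a, b ∈ K. Then the function F(u) := h₀(x(u)) + ∫_{u−τ}^{u} h₁(x(θ)) dθ satisfies F′(t) ≤ ∇h₀(x(t))·f(x(t), x(t)) + τ·e₁(x(t))ᵀC. -/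
open intervalIntegral

/-!
Write `a = x t`, `b = x (t - τ)` and `A = Dh₀(a)`. The chain rule and the fundamental theorem of
calculus give `F'(t) = A (f a b) + h₁ a - h₁ b`, so the claim says that
`ψ y = h₁ y - A (f a y)` changes by at most `τ · e₁(a)ᵀC` between `b` and `a`. The derivative of
`ψ` along `x` is `∑ⱼ x'ⱼ · (∂ⱼh₁ - A ∂ⱼf a)`, whose coefficients are bounded by `e₁(a)` on `K`,
so the mean value inequality along `x` over `[t - τ, t]` closes the argument.
-/

theorem hasDerivAt_integral_sub_const_self {E : Type*} [NormedAddCommGroup E] [NormedSpace ℝ E]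
    [CompleteSpace E] {g : ℝ → E} (hg : Continuous g) (τ t : ℝ) :
    HasDerivAt (fun u => ∫ θ in (u - τ)..u, g θ) (g t - g (t - τ)) t := by
  have hsplit : (fun u => ∫ θ in (u - τ)..u, g θ) =
      fun u => (∫ θ in (0 : ℝ)..u, g θ) - ∫ θ in (0 : ℝ)..(u - τ), g θ := by
    funext u
    exact (integral_interval_sub_left (hg.intervalIntegrable _ _) (hg.intervalIntegrable _ _)).symm
  rw [hsplit]
  exact (hg.integral_hasStrictDerivAt 0 t).hasDerivAt.sub
    ((hg.integral_hasStrictDerivAt 0 (t - τ)).hasDerivAt.comp_sub_const t τ)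

theorem ContinuousLinearMap.apply_eq_sum_mul_apply_single {ι : Type*} [Fintype ι] [DecidableEq ι]
    (L : (ι → ℝ) →L[ℝ] ℝ) (v : ι → ℝ) : L v = ∑ j, v j * L (Pi.single j 1) := by
  conv_lhs => rw [← Finset.univ_sum_single v]
  simp only [map_sum]
  refine Finset.sum_congr rfl fun j _ => ?_
  rw [← smul_eq_mul, ← map_smul, ← Pi.single_smul, smul_eq_mul, mul_one]

theorem ContinuousLinearMap.abs_apply_le_sum_mul {ι : Type*} [Fintype ι] [DecidableEq ι]
    (L : (ι → ℝ) →L[ℝ] ℝ) {v e C : ι → ℝ} (he : ∀ j, |L (Pi.single j 1)| ≤ e j)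
    (hv : ∀ j, |v j| ≤ C j) : |L v| ≤ ∑ j, e j * C j := by
  rw [L.apply_eq_sum_mul_apply_single]
  refine (Finset.abs_sum_le_sum_abs _ _).trans (Finset.sum_le_sum fun j _ => ?_)
  rw [abs_mul, mul_comm (e j)]
  exact mul_le_mul (hv j) (he j) (abs_nonneg _) ((abs_nonneg _).trans (hv j))

theorem abs_comp_sub_le_of_abs_fderiv_single_le {ι : Type*} [Fintype ι] [DecidableEq ι]
    {ψ : (ι → ℝ) → ℝ} {ψ' : (ι → ℝ) → (ι → ℝ) →L[ℝ] ℝ} {K : Set (ι → ℝ)} {e C : ι → ℝ}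
    (hψ : ∀ y, HasFDerivAt ψ (ψ' y) y) (he : ∀ y ∈ K, ∀ j, |ψ' y (Pi.single j 1)| ≤ e j)
    {x x' : ℝ → ι → ℝ} {s t : ℝ} (hst : s ≤ t)
    (hx : ∀ θ ∈ Set.Icc s t, HasDerivAt x (x' θ) θ) (hxK : ∀ θ ∈ Set.Icc s t, x θ ∈ K)
    (hx' : ∀ θ ∈ Set.Icc s t, ∀ j, |x' θ j| ≤ C j) :
    |ψ (x t) - ψ (x s)| ≤ (∑ j, e j * C j) * (t - s) := by
  have hderiv : ∀ θ ∈ Set.Icc s t, HasDerivWithinAt (ψ ∘ x) (ψ' (x θ) (x' θ)) (Set.Icc s t) θ :=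
    fun θ hθ => ((hψ (x θ)).comp_hasDerivAt θ (hx θ hθ)).hasDerivWithinAt
  have hbound : ∀ θ ∈ Set.Ico s t, ‖ψ' (x θ) (x' θ)‖ ≤ ∑ j, e j * C j := fun θ hθ =>
    (ψ' (x θ)).abs_apply_le_sum_mul (he _ (hxK θ (Set.Ico_subset_Icc_self hθ)))
      (hx' θ (Set.Ico_subset_Icc_self hθ))
  exact norm_image_sub_le_of_norm_deriv_le_segment' hderiv hbound t ⟨hst, le_rfl⟩

theorem stmt_3_general {n : ℕ} (τ : ℝ) (hτ : 0 < τ) (K : Set (Fin n → ℝ))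
    (f : (Fin n → ℝ) → (Fin n → ℝ) → (Fin n → ℝ))
    (hf : ∀ a : Fin n → ℝ, ContDiff ℝ 1 (f a))
    (h₀ h₁ : (Fin n → ℝ) → ℝ) (hh₀ : ContDiff ℝ 1 h₀) (hh₁ : ContDiff ℝ 1 h₁)
    (e₁ : (Fin n → ℝ) → (Fin n → ℝ)) (C : Fin n → ℝ)
    (t : ℝ) (x x' : ℝ → (Fin n → ℝ)) (hxc : Continuous x)
    (hx : ∀ θ ∈ Set.Icc (t - τ) t, HasDerivAt x (x' θ) θ)
    (hxK : ∀ θ ∈ Set.Icc (t - τ) t, x θ ∈ K)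
    (hx'C : ∀ θ ∈ Set.Icc (t - τ) t, ∀ i, |x' θ i| ≤ C i)
    (hx't : x' t = f (x t) (x (t - τ)))
    (he₁ : ∀ a ∈ K, ∀ b ∈ K, ∀ j,
      |fderiv ℝ h₁ b (Pi.single j 1) -
        fderiv ℝ h₀ a (fderiv ℝ (f a) b (Pi.single j 1))| ≤ e₁ a j) :
    ∃ d : ℝ,
      HasDerivAt (fun u => h₀ (x u) + ∫ θ in (u - τ)..u, h₁ (x θ)) d t ∧
      d ≤ fderiv ℝ h₀ (x t) (f (x t) (x t)) + τ * ∑ i, e₁ (x t) i * C i := by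
  have htmem : t ∈ Set.Icc (t - τ) t := ⟨by linarith, le_rfl⟩
  set a := x t
  set A := fderiv ℝ h₀ a
  have hF := ((hh₀.differentiable one_ne_zero a).hasFDerivAt.comp_hasDerivAt t (hx t htmem)).add
    (hasDerivAt_integral_sub_const_self (hh₁.continuous.comp hxc) τ t)
  refine ⟨_, hF, ?_⟩
  have hψ : ∀ y, HasFDerivAt (fun y => h₁ y - A (f a y))
      (fderiv ℝ h₁ y - A.comp (fderiv ℝ (f a) y)) y := fun y =>
    (hh₁.differentiable one_ne_zero y).hasFDerivAt.sub
      (A.hasFDerivAt.comp y ((hf a).differentiable one_ne_zero y).hasFDerivAt)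
  have hMVT := abs_comp_sub_le_of_abs_fderiv_single_le hψ (he₁ a (hxK t htmem))
    (by linarith) hx hxK hx'C
  rw [sub_sub_cancel] at hMVT
  simp only [Function.comp_apply, hx't]
  linarith [(abs_le.mp hMVT).2]

/-- Bound on the time-derivative of the integral-form reach-avoid barrier
functional (derivation of condition (2a) from (6a) in the proof of Theorem 2):
under the coordinatewise bounds `|∇h₁(b)ᵀ - ∇h₀(a)ᵀ·J_y f(a,b)| ≤ e₁(a)ᵀ` on `K`
and `|x'| ≤ C` on `[t-τ, t]`, the function
`F u = h₀(x u) + ∫_{u-τ}^{u} h₁(x θ) dθ` is differentiable at `t` with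
`F'(t) ≤ ∇h₀(x t)·f(x t, x t) + τ·e₁(x t)ᵀ C`. -/
theorem stmt_3 {n : ℕ} (τ : ℝ) (hτ : 0 < τ) (K : Set (Fin n → ℝ))
    (f : (Fin n → ℝ) → (Fin n → ℝ) → (Fin n → ℝ))
    (hf : ∀ a : Fin n → ℝ, ContDiff ℝ 1 (f a))
    (h₀ h₁ : (Fin n → ℝ) → ℝ) (hh₀ : ContDiff ℝ 1 h₀) (hh₁ : ContDiff ℝ 1 h₁)
    (e₁ : (Fin n → ℝ) → (Fin n → ℝ)) (C : Fin n → ℝ)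
    (t : ℝ) (x x' : ℝ → (Fin n → ℝ)) (hxc : Continuous x)
    (hx : ∀ θ ∈ Set.Icc (t - τ) t, HasDerivAt x (x' θ) θ)
    (hx'c : ContinuousOn x' (Set.Icc (t - τ) t))
    (hxK : ∀ θ ∈ Set.Icc (t - τ) t, x θ ∈ K)
    (hx'C : ∀ θ ∈ Set.Icc (t - τ) t, ∀ i, |x' θ i| ≤ C i)
    (hx't : x' t = f (x t) (x (t - τ)))
    (he₁ : ∀ a ∈ K, ∀ b ∈ K, ∀ j,
      |fderiv ℝ h₁ b (Pi.single j 1) -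
        fderiv ℝ h₀ a (fderiv ℝ (f a) b (Pi.single j 1))| ≤ e₁ a j) :
    ∃ d : ℝ,
      HasDerivAt (fun u => h₀ (x u) + ∫ θ in (u - τ)..u, h₁ (x θ)) d t ∧
      d ≤ fderiv ℝ h₀ (x t) (f (x t) (x t)) + τ * ∑ i, e₁ (x t) i * C i :=
  stmt_3_general τ hτ K f hf h₀ h₁ hh₀ hh₁ e₁ C t x x' hxc hx hxK hx'C hx't he₁
end

section
/- Let τ > 0, let f : ℝⁿ × ℝⁿ → ℝⁿ be continuous, let S = {x ∈ ℝⁿ : s(x) ≤ 0} be a bounded safe set (s continuous) and T = {x ∈ ℝⁿ : g(x) ≤ 0} ⊆ S a target set (g continuous). Let H : C([−τ,0], ℝⁿ) → ℝ, let φ ∈ C([−τ,0], S) with H(φ) < 0, and let x be a solution of the delay differential equation ẋ(t) = f(x(t), x(t−τ)) with initial condition φ. Assume: (a) for every u ≥ 0 such that x(s) ∈ cl(S \ T) for all s ∈ [u−τ, u], the function v ↦ H(x_v) is differentiable at u with derivative ≤ 0; (b) H(ψ) ≥ 0 for every ψ ∈ C([−τ,0], cl(S \ T)) with ψ(0) ∈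 ∂S. Then for every t ≥ 0 such that x(s) ∈ cl(S \ T) for all s ∈ [−τ, t], we have H(x_t) ≤ H(φ) < 0 and x(t) ∉ ∂S. -/
open Set

/-- The segment `x_t ∈ C([-τ,0], ℝⁿ)` of a continuous trajectory `x`,
defined by `x_t(θ) = x(t + θ)`. -/
noncomputable def seg {n : ℕ} (τ : ℝ) (x : ℝ → (Fin n → ℝ)) (hx : Continuous x)
    (t : ℝ) : C(Set.Icc (-τ) (0:ℝ), Fin n → ℝ) :=
  ⟨fun θ => x (t + θ.1), hx.comp (continuous_const.add continuous_subtype_val)⟩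

/-- Safety claim (part (i) of the proof of Theorem 1 of the paper): under the
decrease condition (a) and the boundary condition (b) for the functional `H`,
as long as the trajectory stays in `cl(S \ T)`, the value of `H` along segments
does not exceed `H φ < 0` and the trajectory never touches the boundary of `S`. -/
theorem stmt_9 {n : ℕ} (τ : ℝ) (hτ : 0 < τ)
    (f : (Fin n → ℝ) → (Fin n → ℝ) → (Fin n → ℝ))
    (hf : Continuous (Function.uncurry f))
    (s g : (Fin n → ℝ) → ℝ) (hs : Continuous s) (hg : Continuous g)
    (S T : Set (Fin n → ℝ))
    (hSdef : S = {y | s y ≤ 0}) (hTdef : T = {y | g y ≤ 0})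
    (hSbdd : Bornology.IsBounded S) (hTS : T ⊆ S)
    (H : C(Set.Icc (-τ) (0:ℝ), Fin n → ℝ) → ℝ)
    (φ : C(Set.Icc (-τ) (0:ℝ), Fin n → ℝ)) (hφS : ∀ θ, φ θ ∈ S)
    (hHφ : H φ < 0)
    (x : ℝ → (Fin n → ℝ)) (hx : Continuous x)
    (hinit : ∀ θ : Set.Icc (-τ) (0:ℝ), x θ.1 = φ θ)
    (hsol : ∀ t : ℝ, 0 ≤ t → HasDerivAt x (f (x t) (x (t - τ))) t)
    -- (a): along segments contained in cl(S \ T), H is nonincreasing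
    (ha : ∀ u : ℝ, 0 ≤ u → (∀ v ∈ Set.Icc (u - τ) u, x v ∈ closure (S \ T)) →
      ∃ d : ℝ, d ≤ 0 ∧ HasDerivAt (fun v => H (seg τ x hx v)) d u)
    -- (b): H is nonnegative on segments in cl(S \ T) ending on the boundary of S
    (hb : ∀ ψ : C(Set.Icc (-τ) (0:ℝ), Fin n → ℝ),
      (∀ θ, ψ θ ∈ closure (S \ T)) →
      ψ ⟨0, Set.mem_Icc.mpr ⟨neg_nonpos.mpr hτ.le, le_rfl⟩⟩ ∈ frontier S →
      0 ≤ H ψ) :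
    ∀ t : ℝ, 0 ≤ t → (∀ u ∈ Set.Icc (-τ) t, x u ∈ closure (S \ T)) →
      H (seg τ x hx t) ≤ H φ ∧ H φ < 0 ∧ x t ∉ frontier S := by
  intro t ht hcl
  -- seg at 0 is φ
  have hseg0 : seg τ x hx 0 = φ := by
    ext θ i
    simpa [seg] using congrFun (hinit θ) i
  -- the condition of (a) holds for every u ∈ [0, t]
  have hcond : ∀ u ∈ Icc (0:ℝ) t, ∀ v ∈ Icc (u - τ) u, x v ∈ closure (S \ T) := by
    intro u hu v hv
    exact hcl v ⟨le_trans (by linarith [hu.1]) hv.1, le_trans hv.2 hu.2⟩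
  set h : ℝ → ℝ := fun v => H (seg τ x hx v) with hh
  have hderivAt : ∀ u ∈ Icc (0:ℝ) t, ∃ d : ℝ, d ≤ 0 ∧ HasDerivAt h d u := by
    intro u hu
    exact ha u hu.1 (hcond u hu)
  have hcont : ContinuousOn h (Icc 0 t) := by
    intro u hu
    obtain ⟨d, _, hd⟩ := hderivAt u hu
    exact hd.continuousAt.continuousWithinAt
  have hmono : AntitoneOn h (Icc 0 t) := by
    apply antitoneOn_of_deriv_nonpos (convex_Icc 0 t) hcont
    · intro u hu
      obtain ⟨d, _, hd⟩ := hderivAt u (interior_subset hu)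
      exact hd.differentiableAt.differentiableWithinAt
    · intro u hu
      obtain ⟨d, hd0, hd⟩ := hderivAt u (interior_subset hu)
      rw [hd.deriv]; exact hd0
  have hle : h t ≤ H φ := by
    rw [← hseg0]
    exact hmono (left_mem_Icc.mpr ht) (right_mem_Icc.mpr ht) ht
  refine ⟨hle, hHφ, ?_⟩
  intro hfr
  have hseg_mem : ∀ θ, seg τ x hx t θ ∈ closure (S \ T) := by
    intro θ
    exact hcl (t + θ.1) ⟨by linarith [θ.2.1, θ.2.2, ht], by linarith [θ.2.2]⟩
  have h0 : seg τ x hx t ⟨0, Set.mem_Icc.mpr ⟨neg_nonpos.mpr hτ.le, le_rfl⟩⟩ ∈ frontier S := by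
    simpa [seg] using hfr
  have := hb (seg τ x hx t) hseg_mem h0
  linarith [lt_of_le_of_lt hle hHφ]
end

section
/- Let V be a type, let r : V → V → Prop be a relation, and let Tg ⊆ V. Define the set R := {v ∈ V : there exists t ∈ Tg with ReflTransGen r v t} of vertices from which some target vertex is reachable, and define the restricted relation r′ by r′ a b ↔ (r a b ∧ a ∈ R ∧ b ∈ R). Then for every v ∈ R there exists t ∈ Tg with ReflTransGen r′ v t. In other words, deleting all vertices from which the target set is unreachable (together with their incident edges) preserves every trace that terminates at a target vertex. -/
/-- Completeness of the pruning (Theorem 3 of the paper): restricting the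
relation `r` to the set `R` of vertices from which some target vertex is
reachable preserves reachability of target vertices from every vertex of `R`. -/
theorem stmt_11 {V : Type*} (r : V → V → Prop) (Tg : Set V) :
    ∀ v ∈ {v : V | ∃ t ∈ Tg, Relation.ReflTransGen r v t},
      ∃ t ∈ Tg,
        Relation.ReflTransGen
          (fun a b => r a b ∧ a ∈ {v : V | ∃ t ∈ Tg, Relation.ReflTransGen r v t}
            ∧ b ∈ {v : V | ∃ t ∈ Tg, Relation.ReflTransGen r v t}) v t := by
  rintro v ⟨t, ht, hvt⟩
  refine ⟨t, ht, ?_⟩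
  induction hvt using Relation.ReflTransGen.head_induction_on with
  | refl => exact Relation.ReflTransGen.refl
  | head h htail ih =>
      exact Relation.ReflTransGen.head
        ⟨h, ⟨t, ht, Relation.ReflTransGen.head h htail⟩, ⟨t, ht, htail⟩⟩ ih
end
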